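/- Let m ≥ 1 and let ν_0,…,ν_m, b_0,…,b_m, z_1,…,z_m, and for j=1,…,l let ν_k^j, b_k^j, z_k^j (1 ≤ k ≤ c_j) and λ_j ≥ 0 be nonnegative integers. Assume: (i) Σ_n ν_n t^n = Σ_n b_n t^n + (1+t)Σ_n (ν_n − z_n)t^{n−1} with ν_n ≥ z_n; (ii) for each j, Σ_k ν_k^j t^k = Σ_k b_k^j t^k + (1+t)Σ_k (ν_k^j − z_k^j)t^{k−1} with ν_k^j ≥ z_k^j; (iii) ν_n = Σ_{λ_j + k = n} ν_k^j for all n; and (iv) Σ_{λ_j + k = n} z_k^j ≥ z_n for all n. Then Σ_j (Σ_k b_k^j t^k) t^{λ_j} = Σ_n b_n t^n + (1+t)R(t) where R(t) = Σ_{n=1}^m (Σ_{λ_j + k = n} z_k^j − z_n) t^{n−1} has nonnegative integer coefficients. -/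

import Mathlib

open Polynomial

/-! Multiply the Morse identity (ii) for `f_j` by `t^{λ_j}` and sum over `j`. By (iii) the
left-hand sides add up to `Σ ν_n t^n`, which (i) rewrites as `Σ b_n t^n + (1+t) Σ (ν_n - z_n) t^{n-1}`,
while the `(1+t)`-terms regroup along `n = λ_j + k` into `(1+t) Σ (ν_n - Σ_{λ_j+k=n} z^j_k) t^{n-1}`
(the terms with `k = 0` vanish because `z^j_0 = ν^j_0`). Subtracting leaves `(1+t) R(t)`, and the
coefficients of `R` are nonnegative by (iv). -/

open Finset

theorem Finset.sum_sum_Icc_add_eq_sum_Icc_sum_filter {ι M : Type*} [Fintype ι] [AddCommMonoid M]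
    {m : ℕ} (lam c : ι → ℕ) (hdim : ∀ j, lam j + c j ≤ m) (a : ℕ) (g : ι → ℕ → M) :
    ∑ j, ∑ k ∈ Icc a (c j), g j (lam j + k) =
      ∑ n ∈ Icc a m, ∑ j ∈ univ.filter (fun j => lam j + a ≤ n ∧ n ≤ lam j + c j), g j n := by
  have hshift : ∀ j, ∑ k ∈ Icc a (c j), g j (lam j + k) =
      ∑ n ∈ Icc (lam j + a) (lam j + c j), g j n := fun j => by
    rw [← map_add_left_Icc, sum_map]
    rfl
  simp_rw [hshift]
  refine sum_comm' fun j n => ?_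
  simp only [mem_univ, mem_Icc, mem_filter, true_and]
  have := hdim j
  omega

section ShiftSum

variable {ι R : Type*} [Fintype ι]

/-- The paper's `Σ_{λ_j + k = n} f_j(k)`, block `j` occupying degrees `λ_j, …, λ_j + c_j`. -/
def shiftSum [AddCommMonoid R] (lam c : ι → ℕ) (f : ι → ℕ → R) (n : ℕ) : R :=
  ∑ j ∈ univ.filter (fun j => lam j ≤ n ∧ n ≤ lam j + c j), f j (n - lam j)

theorem shiftSum_natCast [AddCommMonoidWithOne R] (lam c : ι → ℕ) (f : ι → ℕ → ℕ) (n : ℕ) :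
    shiftSum lam c (fun j k => (f j k : R)) n = ((shiftSum lam c f n : ℕ) : R) :=
  (Nat.cast_sum _ _).symm

theorem shiftSum_sub [AddCommGroup R] (lam c : ι → ℕ) (f g : ι → ℕ → R) (n : ℕ) :
    shiftSum lam c (fun j k => f j k - g j k) n = shiftSum lam c f n - shiftSum lam c g n :=
  sum_sub_distrib _ _

variable [CommSemiring R] {m : ℕ} (lam c : ι → ℕ)

theorem sum_sum_Icc_C_mul_X_pow_mul_X_pow (hdim : ∀ j, lam j + c j ≤ m) (a : ℕ)
    (f : ι → ℕ → R) :
    ∑ j, (∑ k ∈ Icc a (c j), C (f j k) * X ^ (k - a)) * X ^ lam j =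
      ∑ n ∈ Icc a m, C (∑ j ∈ univ.filter (fun j => lam j + a ≤ n ∧ n ≤ lam j + c j),
        f j (n - lam j)) * X ^ (n - a) := by
  have hblock : ∀ j, (∑ k ∈ Icc a (c j), C (f j k) * X ^ (k - a)) * X ^ lam j =
      ∑ k ∈ Icc a (c j), C (f j (lam j + k - lam j)) * X ^ (lam j + k - a) := fun j => by
    rw [sum_mul]
    refine sum_congr rfl fun k hk => ?_
    rw [Nat.add_sub_cancel_left, mul_assoc, ← pow_add]
    congr 2
    have := (mem_Icc.1 hk).1
    omega
  simp_rw [hblock, map_sum, sum_mul]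
  exact sum_sum_Icc_add_eq_sum_Icc_sum_filter lam c hdim a
    (fun j n => C (f j (n - lam j)) * X ^ (n - a))

theorem sum_sum_range_C_mul_X_pow_mul_X_pow (hdim : ∀ j, lam j + c j ≤ m) (f : ι → ℕ → R) :
    ∑ j, (∑ k ∈ range (c j + 1), C (f j k) * X ^ k) * X ^ lam j =
      ∑ n ∈ range (m + 1), C (shiftSum lam c f n) * X ^ n := by
  simpa only [Nat.range_succ_eq_Icc_zero, Nat.sub_zero, add_zero, shiftSum] using
    sum_sum_Icc_C_mul_X_pow_mul_X_pow lam c hdim 0 f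

theorem sum_sum_Icc_one_C_mul_X_pow_pred_mul_X_pow (hdim : ∀ j, lam j + c j ≤ m)
    (f : ι → ℕ → R) (hf : ∀ j, f j 0 = 0) :
    ∑ j, (∑ k ∈ Icc 1 (c j), C (f j k) * X ^ (k - 1)) * X ^ lam j =
      ∑ n ∈ Icc 1 m, C (shiftSum lam c f n) * X ^ (n - 1) := by
  rw [sum_sum_Icc_C_mul_X_pow_mul_X_pow lam c hdim 1 f]
  refine sum_congr rfl fun n _ => ?_
  congr 2
  refine sum_subset (fun j => by simp only [mem_filter, mem_univ, true_and]; omega)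
    fun j hj hj' => ?_
  simp only [mem_filter, mem_univ, true_and] at hj hj'
  rw [show n - lam j = 0 by omega, hf]

end ShiftSum

theorem stmt_16_general (m l : ℕ)
    (ν b z : ℕ → ℕ) (lam cdim : Fin l → ℕ) (νj bj zj : Fin l → ℕ → ℕ)
    (hdim : ∀ j, lam j + cdim j ≤ m)
    (hz0 : ∀ j, zj j 0 = νj j 0)
    -- (i) polynomial Morse inequalities for `h`
    (hi : (∑ n ∈ Finset.range (m + 1), Polynomial.C (ν n : ℤ) * X ^ n) =
      (∑ n ∈ Finset.range (m + 1), Polynomial.C (b n : ℤ) * X ^ n) +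
        (1 + X) * ∑ n ∈ Finset.Icc 1 m,
          Polynomial.C ((ν n : ℤ) - (z n : ℤ)) * X ^ (n - 1))
    -- (ii) polynomial Morse inequalities for each `f_j`
    (hii : ∀ j, (∑ k ∈ Finset.range (cdim j + 1), Polynomial.C (νj j k : ℤ) * X ^ k) =
      (∑ k ∈ Finset.range (cdim j + 1), Polynomial.C (bj j k : ℤ) * X ^ k) +
        (1 + X) * ∑ k ∈ Finset.Icc 1 (cdim j),
          Polynomial.C ((νj j k : ℤ) - (zj j k : ℤ)) * X ^ (k - 1))
    -- (iii) `ν_n = Σ_{λ_j + k = n} ν^j_k`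
    (hiii : ∀ n, ν n = ∑ j ∈ Finset.univ.filter
        (fun j : Fin l => lam j ≤ n ∧ n ≤ lam j + cdim j), νj j (n - lam j))
    -- (iv) `Σ_{λ_j + k = n} z^j_k ≥ z_n`
    (hiv : ∀ n, z n ≤ ∑ j ∈ Finset.univ.filter
        (fun j : Fin l => lam j ≤ n ∧ n ≤ lam j + cdim j), zj j (n - lam j)) :
    (∑ j : Fin l, (∑ k ∈ Finset.range (cdim j + 1),
          Polynomial.C (bj j k : ℤ) * X ^ k) * X ^ lam j) =
      (∑ n ∈ Finset.range (m + 1), Polynomial.C (b n : ℤ) * X ^ n) +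
        (1 + X) * ∑ n ∈ Finset.Icc 1 m,
          Polynomial.C (((∑ j ∈ Finset.univ.filter
              (fun j : Fin l => lam j ≤ n ∧ n ≤ lam j + cdim j),
                zj j (n - lam j) : ℕ) : ℤ) - (z n : ℤ)) * X ^ (n - 1) ∧
    ∀ n ∈ Finset.Icc 1 m,
      0 ≤ ((∑ j ∈ Finset.univ.filter
          (fun j : Fin l => lam j ≤ n ∧ n ≤ lam j + cdim j),
            zj j (n - lam j) : ℕ) : ℤ) - (z n : ℤ) := by
  have hν : ∑ j, (∑ k ∈ range (cdim j + 1), C (νj j k : ℤ) * X ^ k) * X ^ lam j =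
      ∑ n ∈ range (m + 1), C (ν n : ℤ) * X ^ n := by
    simp only [sum_sum_range_C_mul_X_pow_mul_X_pow lam cdim hdim, shiftSum_natCast, hiii]
    rfl
  have hkernel :
      ∑ j, (∑ k ∈ Icc 1 (cdim j), C ((νj j k : ℤ) - zj j k) * X ^ (k - 1)) * X ^ lam j =
      ∑ n ∈ Icc 1 m, C ((ν n : ℤ) - (shiftSum lam cdim zj n : ℕ)) * X ^ (n - 1) := by
    rw [sum_sum_Icc_one_C_mul_X_pow_pred_mul_X_pow lam cdim hdim _ (by simp [hz0])]
    simp only [shiftSum_sub, shiftSum_natCast, hiii]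
    rfl
  have hb : ∑ j, (∑ k ∈ range (cdim j + 1), C (bj j k : ℤ) * X ^ k) * X ^ lam j =
      ∑ j, (∑ k ∈ range (cdim j + 1), C (νj j k : ℤ) * X ^ k) * X ^ lam j -
        (1 + X) * ∑ j, (∑ k ∈ Icc 1 (cdim j), C ((νj j k : ℤ) - zj j k) * X ^ (k - 1)) *
          X ^ lam j := by
    simp only [hii]
    rw [mul_sum, ← sum_sub_distrib]
    exact sum_congr rfl fun j _ => by ring
  refine ⟨?_, fun n _ => sub_nonneg.2 (by exact_mod_cast hiv n)⟩
  rw [hb, hν, hkernel, hi, add_sub_assoc, ← mul_sub, ← sum_sub_distrib]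
  congr 2
  refine sum_congr rfl fun n _ => ?_
  rw [← sub_mul, ← map_sub, sub_sub_sub_cancel_left]
  rfl

/-- the combinatorial skeleton of the proof of the Morse-Bott
inequalities.  Given the polynomial Morse inequalities for `h` (data `ν, b, z`) and
for each `f_j` (data `ν^j, b^j, z^j` in degrees `0, …, c_j`, with `z^j_0 = ν^j_0`
since `∂_0 = 0`), the index relation `ν_n = Σ_{λ_j + k = n} ν^j_k`, and the kernel
estimate `Σ_{λ_j + k = n} z^j_k ≥ z_n`, one gets
`Σ_j (Σ_k b^j_k t^k) t^{λ_j} = Σ_n b_n t^n + (1+t) R(t)` with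
`R(t) = Σ_{n=1}^m (Σ_{λ_j + k = n} z^j_k - z_n) t^{n-1}` having nonnegative
coefficients. -/
theorem stmt_16 (m l : ℕ) (hm : 1 ≤ m)
    (ν b z : ℕ → ℕ) (lam cdim : Fin l → ℕ) (νj bj zj : Fin l → ℕ → ℕ)
    (hdim : ∀ j, lam j + cdim j ≤ m)
    (hz0 : ∀ j, zj j 0 = νj j 0)
    (hzν : ∀ n, z n ≤ ν n)
    (hzνj : ∀ j k, zj j k ≤ νj j k)
    -- (i) polynomial Morse inequalities for `h`
    (hi : (∑ n ∈ Finset.range (m + 1), Polynomial.C (ν n : ℤ) * X ^ n) =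
      (∑ n ∈ Finset.range (m + 1), Polynomial.C (b n : ℤ) * X ^ n) +
        (1 + X) * ∑ n ∈ Finset.Icc 1 m,
          Polynomial.C ((ν n : ℤ) - (z n : ℤ)) * X ^ (n - 1))
    -- (ii) polynomial Morse inequalities for each `f_j`
    (hii : ∀ j, (∑ k ∈ Finset.range (cdim j + 1), Polynomial.C (νj j k : ℤ) * X ^ k) =
      (∑ k ∈ Finset.range (cdim j + 1), Polynomial.C (bj j k : ℤ) * X ^ k) +
        (1 + X) * ∑ k ∈ Finset.Icc 1 (cdim j),
          Polynomial.C ((νj j k : ℤ) - (zj j k : ℤ)) * X ^ (k - 1))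
    -- (iii) `ν_n = Σ_{λ_j + k = n} ν^j_k`
    (hiii : ∀ n, ν n = ∑ j ∈ Finset.univ.filter
        (fun j : Fin l => lam j ≤ n ∧ n ≤ lam j + cdim j), νj j (n - lam j))
    -- (iv) `Σ_{λ_j + k = n} z^j_k ≥ z_n`
    (hiv : ∀ n, z n ≤ ∑ j ∈ Finset.univ.filter
        (fun j : Fin l => lam j ≤ n ∧ n ≤ lam j + cdim j), zj j (n - lam j)) :
    (∑ j : Fin l, (∑ k ∈ Finset.range (cdim j + 1),
          Polynomial.C (bj j k : ℤ) * X ^ k) * X ^ lam j) =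
      (∑ n ∈ Finset.range (m + 1), Polynomial.C (b n : ℤ) * X ^ n) +
        (1 + X) * ∑ n ∈ Finset.Icc 1 m,
          Polynomial.C (((∑ j ∈ Finset.univ.filter
              (fun j : Fin l => lam j ≤ n ∧ n ≤ lam j + cdim j),
                zj j (n - lam j) : ℕ) : ℤ) - (z n : ℤ)) * X ^ (n - 1) ∧
    ∀ n ∈ Finset.Icc 1 m,
      0 ≤ ((∑ j ∈ Finset.univ.filter
          (fun j : Fin l => lam j ≤ n ∧ n ≤ lam j + cdim j),
            zj j (n - lam j) : ℕ) : ℤ) - (z n : ℤ) :=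
  stmt_16_general m l ν b z lam cdim νj bj zj hdim hz0 hi hii hiii hiv
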